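/- Suppose g, p : ℝᵐ → ℝ and h : ℝᵐ → ℝⁿ with p(x) > 0 for all x ≠ 0. If for all x ≠ 0 the block matrix [[g(x)·p(x), p(x)·h(x)ᵀ],[p(x)·h(x), g(x)·I]] is negative definite, then g(x) < −‖h(x)‖·√(p(x)) for all x ≠ 0. -/

import Mathlib

/-!
Evaluating the quadratic form of `[[g p, p hᵀ], [p h, g I]]` at the test vector `(‖h‖, √p h)`
gives `2 p ‖h‖² (g + √p ‖h‖)`, which must be negative; when `h = 0` the test vector `(1, 0)`
gives `g p < 0` instead.
-/

open Matrix Real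

namespace Matrix

variable {R : Type*} [CommRing R] {n : Type*} [Fintype n] [DecidableEq n]

def arrowhead (a : R) (b : n → R) (c : R) : Matrix (Fin 1 ⊕ n) (Fin 1 ⊕ n) R :=
  fromBlocks (of fun _ _ => a) (replicateRow _ b) (replicateCol _ b) (c • 1)

theorem arrowhead_mulVec_sumElim (a c t : R) (b v : n → R) :
    arrowhead a b c *ᵥ Sum.elim (fun _ => t) v =
      Sum.elim (fun _ => a * t + b ⬝ᵥ v) (t • b + c • v) := by
  ext (i | k) <;> simp [arrowhead, mulVec, dotProduct, one_apply, mul_comm]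

theorem sumElim_dotProduct_arrowhead_mulVec_sumElim (a c t : R) (b v : n → R) :
    Sum.elim (fun _ => t) v ⬝ᵥ arrowhead a b c *ᵥ Sum.elim (fun _ => t) v =
      a * t ^ 2 + 2 * t * (b ⬝ᵥ v) + c * (v ⬝ᵥ v) := by
  rw [arrowhead_mulVec_sumElim, sumElim_dotProduct_sumElim, dotProduct_add, dotProduct_smul,
    dotProduct_smul, dotProduct_comm v b]
  simp only [dotProduct, Finset.univ_unique, Finset.sum_singleton, smul_eq_mul]
  ring

theorem lt_neg_sqrt_mul_sqrt_of_arrowhead_negDef {g p : ℝ} {h : n → ℝ} (hp : 0 < p)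
    (hneg : ∀ z, z ≠ 0 → z ⬝ᵥ arrowhead (g * p) (p • h) g *ᵥ z < 0) :
    g < -(√(h ⬝ᵥ h) * √p) := by
  set s := √(h ⬝ᵥ h)
  set q := √p
  have hs : s ^ 2 = h ⬝ᵥ h := sq_sqrt (dotProduct_self_star_nonneg h)
  have hq : q ^ 2 = p := sq_sqrt hp.le
  obtain hs0 | hs0 : 0 = s ∨ 0 < s := (sqrt_nonneg _).eq_or_lt
  · have hform := hneg (Sum.elim (fun _ => 1) 0) fun hz => by
      simpa using congrFun hz (Sum.inl 0)
    rw [sumElim_dotProduct_arrowhead_mulVec_sumElim] at hform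
    simp only [dotProduct_zero, ← hs0] at hform ⊢
    nlinarith
  · have hform := hneg (Sum.elim (fun _ => s) (q • h)) fun hz => by
      simpa [hs0.ne'] using congrFun hz (Sum.inl 0)
    rw [sumElim_dotProduct_arrowhead_mulVec_sumElim] at hform
    simp only [smul_dotProduct, dotProduct_smul, smul_eq_mul] at hform
    have hfactor : 2 * p * s ^ 2 * (g + q * s) < 0 := by
      linear_combination hform + (g * p + 2 * p * q * s) * hs - g * (h ⬝ᵥ h) * hq
    nlinarith [mul_pos (mul_pos two_pos hp) (pow_pos hs0 2)]

end Matrix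

theorem block_negdef_implies_bound (m n : ℕ)
    (g p : (Fin m → ℝ) → ℝ) (h : (Fin m → ℝ) → (Fin n → ℝ))
    (hp : ∀ x : Fin m → ℝ, x ≠ 0 → 0 < p x)
    (hneg : ∀ x : Fin m → ℝ, x ≠ 0 →
      ∀ z : (Fin 1 ⊕ Fin n) → ℝ, z ≠ 0 →
        z ⬝ᵥ (Matrix.of fun i j =>
          match i, j with
          | Sum.inl _, Sum.inl _ => g x * p x
          | Sum.inl _, Sum.inr k => p x * h x k
          | Sum.inr k, Sum.inl _ => p x * h x k
          | Sum.inr k, Sum.inr l => if k = l then g x else 0).mulVec z < 0) :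
    ∀ x : Fin m → ℝ, x ≠ 0 →
      g x < -(Real.sqrt (∑ i, h x i ^ 2) * Real.sqrt (p x)) := by
  intro x hx
  have hsum : ∑ i, h x i ^ 2 = h x ⬝ᵥ h x := by simp [dotProduct, sq]
  rw [hsum]
  refine lt_neg_sqrt_mul_sqrt_of_arrowhead_negDef (hp x hx) fun z hz => ?_
  convert hneg x hx z hz using 3
  ext (i | k) (j | l) <;> simp [arrowhead, one_apply]
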